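/- For the system y = G_u u + G_d d + G_f f (w ≡ 0) and a given stable proper reference model M_{rf}(λ), the exact model-matching problem—find stable proper Q(λ) and a diagonal, proper, stable, invertible M(λ) with Q·[G_u;I]=0, Q·[G_d;0]=0 and Q·[G_f;0] = M·M_{rf}—is solvable if and only if rank [G_d(λ) G_f(λ)] = rank [[G_d(λ), G_f(λ)],[0, M_{rf}(λ)]]. -/

import Mathlib

/-!
Statement 8: For the system y = G_u u + G_d d + G_f f (w ≡ 0) and a given stable
proper reference model M_{rf}(λ), the exact model-matching problem — find stable
proper Q(λ) and a diagonal, proper, stable, invertible M(λ) with Q·[G_u;I] = 0,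
Q·[G_d;0] = 0 and Q·[G_f;0] = M·M_{rf} — is solvable if and only if
rank [G_d  G_f] = rank [[G_d, G_f],[0, M_{rf}]].
-/

open Matrix Polynomial

noncomputable section

/-- A real rational function is proper. -/
def RatFunc.IsProperR (f : RatFunc ℝ) : Prop :=
  f.num.natDegree ≤ f.denom.natDegree

/-- A real rational function is stable (continuous time). -/
def RatFunc.IsStableR (f : RatFunc ℝ) : Prop :=
  ∀ z : ℂ, (f.denom.map (algebraMap ℝ ℂ)).IsRoot z → z.re < 0

/-- A rational matrix is proper if all its entries are proper. -/
def Matrix.IsProperR {m n : Type*} (G : Matrix m n (RatFunc ℝ)) : Prop :=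
  ∀ i j, (G i j).IsProperR

/-- A rational matrix is stable if all its entries are stable. -/
def Matrix.IsStableR {m n : Type*} (G : Matrix m n (RatFunc ℝ)) : Prop :=
  ∀ i j, (G i j).IsStableR

/-!
Because `M` is invertible, a solution `(Q, M)` yields `Y = M⁻¹ Q₁` (with `Q₁` the block of `Q`
acting on `y`) such that `Y G_d = 0` and `Y G_f = M_rf`. Conversely, from any rational such `Y`
the filter `Q = [Y, -Y G_u]` already decouples `u` and `d`; multiplying each of its rows by a
nonzero proper stable scalar that clears its unstable and improper part makes it proper and
stable, and these scalars form the diagonal `M`. Finally, a rational `Y` exists exactly when the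
rows of `[0, M_rf]` lie in the row space of `[G_d, G_f]`, which is the rank condition.
-/

namespace RatFunc

lemma isProperR_iff_intDegree_nonpos (f : RatFunc ℝ) : f.IsProperR ↔ f.intDegree ≤ 0 := by
  rw [IsProperR, intDegree]
  omega

lemma isProperR_zero : (0 : RatFunc ℝ).IsProperR := by
  simp [IsProperR]

lemma isStableR_zero : (0 : RatFunc ℝ).IsStableR := by
  simp [IsStableR]

lemma IsProperR.mul {f g : RatFunc ℝ} (hf : f.IsProperR) (hg : g.IsProperR) :
    (f * g).IsProperR := by
  rcases eq_or_ne f 0 with rfl | hf0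
  · simpa using isProperR_zero
  rcases eq_or_ne g 0 with rfl | hg0
  · simpa using isProperR_zero
  rw [isProperR_iff_intDegree_nonpos] at hf hg ⊢
  rw [intDegree_mul hf0 hg0]
  omega

lemma isProperR_div {a b : ℝ[X]} (hb : b ≠ 0) (hab : a.natDegree ≤ b.natDegree) :
    (algebraMap ℝ[X] (RatFunc ℝ) a / algebraMap ℝ[X] (RatFunc ℝ) b).IsProperR := by
  rcases eq_or_ne a 0 with rfl | ha
  · simpa using isProperR_zero
  rw [isProperR_iff_intDegree_nonpos, intDegree_div (by simpa using ha) (by simpa using hb),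
    intDegree_polynomial, intDegree_polynomial]
  omega

lemma IsStableR.of_denom_dvd {f : RatFunc ℝ} {q : ℝ[X]} (hdvd : f.denom ∣ q)
    (hq : ∀ z : ℂ, (q.map (algebraMap ℝ ℂ)).IsRoot z → z.re < 0) : f.IsStableR :=
  fun z hz => hq z (hz.dvd (Polynomial.map_dvd _ hdvd))

lemma IsStableR.mul {f g : RatFunc ℝ} (hf : f.IsStableR) (hg : g.IsStableR) :
    (f * g).IsStableR := by
  refine .of_denom_dvd (denom_mul_dvd f g) fun z hz => ?_
  rw [Polynomial.map_mul, IsRoot, Polynomial.eval_mul, mul_eq_zero] at hz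
  exact hz.elim (hf z) (hg z)

def properStable : Submonoid (RatFunc ℝ) where
  carrier := {f | f.IsProperR ∧ f.IsStableR}
  mul_mem' hf hg := ⟨hf.1.mul hg.1, hf.2.mul hg.2⟩
  one_mem' := ⟨by simp [IsProperR], by simp [IsStableR]⟩

/-- The multiplier `f.denom / (X + 1) ^ N` cancels the poles of `f`, and the stable denominator
`(X + 1) ^ N` has degree large enough to make both it and the product proper. -/
lemma exists_mul_mem_properStable (f : RatFunc ℝ) :
    ∃ m ≠ 0, m ∈ properStable ∧ m * f ∈ properStable := by
  set N := max f.denom.natDegree f.num.natDegree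
  set b : ℝ[X] := (Polynomial.X + Polynomial.C 1) ^ N
  have hb : b ≠ 0 := ((monic_X_add_C 1).pow N).ne_zero
  have hbN : b.natDegree = N := by rw [natDegree_pow, natDegree_X_add_C, mul_one]
  have hb_roots (z : ℂ) (hz : (b.map (algebraMap ℝ ℂ)).IsRoot z) : z.re < 0 := by
    have : z + 1 = 0 := (by simpa [b] using hz : z + 1 = 0 ∧ N ≠ 0).1
    rw [eq_neg_of_add_eq_zero_left this]
    norm_num
  have hden : algebraMap ℝ[X] (RatFunc ℝ) f.denom ≠ 0 := by simpa using f.denom_ne_zero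
  have hmf : algebraMap ℝ[X] (RatFunc ℝ) f.denom / algebraMap ℝ[X] (RatFunc ℝ) b * f =
      algebraMap ℝ[X] (RatFunc ℝ) f.num / algebraMap ℝ[X] (RatFunc ℝ) b := by
    rw [(div_eq_iff hden).mp (num_div_denom f)]
    ring
  refine ⟨_, div_ne_zero hden (by simpa using hb),
    ⟨isProperR_div hb (hbN ▸ le_max_left _ _), .of_denom_dvd (denom_div_dvd _ _) hb_roots⟩, ?_⟩
  rw [hmf]
  exact ⟨isProperR_div hb (hbN ▸ le_max_right _ _), .of_denom_dvd (denom_div_dvd _ _) hb_roots⟩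

lemma exists_forall_mul_mem_properStable {ι : Type*} [Fintype ι] (q : ι → RatFunc ℝ) :
    ∃ m ≠ 0, m ∈ properStable ∧ ∀ j, m * q j ∈ properStable := by
  classical
  choose m hm0 hm hmq using fun j => exists_mul_mem_properStable (q j)
  refine ⟨∏ j, m j, Finset.prod_ne_zero_iff.mpr fun j _ => hm0 j,
    prod_mem fun j _ => hm j, fun j => ?_⟩
  rw [← Finset.prod_erase_mul _ _ (Finset.mem_univ j), mul_assoc]
  exact mul_mem (prod_mem fun k _ => hm k) (hmq j)

end RatFunc

namespace Matrix

lemma exists_diagonal_mul_isProperR_isStableR {m n : Type*} [Fintype m] [DecidableEq m]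
    [Fintype n] (Y : Matrix m n (RatFunc ℝ)) :
    ∃ d : m → RatFunc ℝ, (∀ i, d i ≠ 0) ∧ (diagonal d).IsProperR ∧ (diagonal d).IsStableR ∧
      (diagonal d * Y).IsProperR ∧ (diagonal d * Y).IsStableR := by
  choose d hd0 hd hdY using fun i => RatFunc.exists_forall_mul_mem_properStable (Y i)
  have hdiag (i j : m) : diagonal d i j ∈ RatFunc.properStable := by
    by_cases h : i = j
    · subst h
      simpa using hd i
    · simpa [diagonal_apply_ne _ h] using ⟨RatFunc.isProperR_zero, RatFunc.isStableR_zero⟩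
  refine ⟨d, hd0, fun i j => (hdiag i j).1, fun i j => (hdiag i j).2,
    fun i j => ?_, fun i j => ?_⟩ <;> rw [diagonal_mul]
  exacts [(hdY i j).1, (hdY i j).2]

section RowSpan

variable {m₁ m₂ n : Type*} [Fintype m₁]

lemma exists_eq_mul_iff_span_row_le {R : Type*} [CommSemiring R] (A : Matrix m₁ n R)
    (B : Matrix m₂ n R) :
    (∃ C : Matrix m₂ m₁ R, B = C * A) ↔
      Submodule.span R (Set.range B.row) ≤ Submodule.span R (Set.range A.row) := by
  rw [← range_vecMulLinear A, Submodule.span_le, Set.range_subset_iff]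
  simp only [SetLike.mem_coe, LinearMap.mem_range, vecMulLinear_apply]
  constructor
  · rintro ⟨C, rfl⟩ i
    exact ⟨C i, (mul_apply_eq_vecMul C A i).symm⟩
  · intro h
    choose C hC using h
    exact ⟨C, funext fun i => (hC i).symm⟩

lemma rank_fromRows_eq_rank_iff {K : Type*} [Field K] [Fintype m₂] [Fintype n]
    (A : Matrix m₁ n K) (B : Matrix m₂ n K) :
    (fromRows A B).rank = A.rank ↔
      Submodule.span K (Set.range B.row) ≤ Submodule.span K (Set.range A.row) := by
  have hspan : Submodule.span K (Set.range (fromRows A B).row) =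
      Submodule.span K (Set.range A.row) ⊔ Submodule.span K (Set.range B.row) := by
    rw [← Submodule.span_union, ← Set.Sum.elim_range]
    rfl
  rw [rank_eq_finrank_span_row, rank_eq_finrank_span_row, hspan, ← sup_eq_left]
  exact ⟨fun h => (Submodule.eq_of_le_of_finrank_eq le_sup_left h.symm).symm, fun h => by rw [h]⟩

end RowSpan

lemma rank_fromCols_eq_rank_fromBlocks_iff {K : Type*} [Field K]
    {p md mf qr : Type*} [Fintype p] [Fintype md] [Fintype mf] [Fintype qr]
    (Gd : Matrix p md K) (Gf : Matrix p mf K) (Mrf : Matrix qr mf K) :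
    (fromCols Gd Gf).rank = (fromBlocks Gd Gf 0 Mrf).rank ↔
      ∃ Y : Matrix qr p K, Y * Gd = 0 ∧ Y * Gf = Mrf := by
  rw [← fromRows_fromCols_eq_fromBlocks, eq_comm, rank_fromRows_eq_rank_iff,
    ← exists_eq_mul_iff_span_row_le]
  simp only [mul_fromCols, fromCols_ext_iff, eq_comm]

end Matrix

section EMMP

variable {p mu md mf qr : Type*} [Fintype p] [Fintype mu] [DecidableEq mu]
  [Fintype qr] [DecidableEq qr]

def IsEMMPSolution (Gu : Matrix p mu (RatFunc ℝ)) (Gd : Matrix p md (RatFunc ℝ))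
    (Gf : Matrix p mf (RatFunc ℝ)) (Mrf : Matrix qr mf (RatFunc ℝ))
    (Q : Matrix qr (p ⊕ mu) (RatFunc ℝ)) (M : Matrix qr qr (RatFunc ℝ)) : Prop :=
  Q.IsProperR ∧ Q.IsStableR ∧ M.IsProperR ∧ M.IsStableR ∧
    (∀ i j : qr, i ≠ j → M i j = 0) ∧ M.det ≠ 0 ∧
    Q * fromRows Gu (1 : Matrix mu mu (RatFunc ℝ)) = 0 ∧
    Q * fromRows Gd (0 : Matrix mu md (RatFunc ℝ)) = 0 ∧
    Q * fromRows Gf (0 : Matrix mu mf (RatFunc ℝ)) = M * Mrf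

variable {Gu : Matrix p mu (RatFunc ℝ)} {Gd : Matrix p md (RatFunc ℝ)}
  {Gf : Matrix p mf (RatFunc ℝ)} {Mrf : Matrix qr mf (RatFunc ℝ)}

lemma IsEMMPSolution.exists_mul_eq {Q : Matrix qr (p ⊕ mu) (RatFunc ℝ)}
    {M : Matrix qr qr (RatFunc ℝ)} (h : IsEMMPSolution Gu Gd Gf Mrf Q M) :
    ∃ Y : Matrix qr p (RatFunc ℝ), Y * Gd = 0 ∧ Y * Gf = Mrf := by
  obtain ⟨-, -, -, -, -, hM, -, hd, hf⟩ := h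
  rw [← fromCols_toCols Q, fromCols_mul_fromRows, Matrix.mul_zero, add_zero] at hd hf
  refine ⟨M⁻¹ * Q.toCols₁, by rw [Matrix.mul_assoc, hd, Matrix.mul_zero], ?_⟩
  rw [Matrix.mul_assoc, hf, ← Matrix.mul_assoc, nonsing_inv_mul M (isUnit_iff_ne_zero.mpr hM),
    Matrix.one_mul]

lemma exists_isEMMPSolution_of_mul_eq {Y : Matrix qr p (RatFunc ℝ)} (hd : Y * Gd = 0)
    (hf : Y * Gf = Mrf) : ∃ Q M, IsEMMPSolution Gu Gd Gf Mrf Q M := by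
  obtain ⟨d, hd0, hdP, hdS, hQP, hQS⟩ :=
    exists_diagonal_mul_isProperR_isStableR (fromCols Y (-(Y * Gu)))
  refine ⟨_, diagonal d, hQP, hQS, hdP, hdS, fun i j hij => diagonal_apply_ne _ hij,
    by simpa [det_diagonal, Finset.prod_eq_zero_iff] using hd0, ?_, ?_, ?_⟩ <;>
  simp [Matrix.mul_assoc, fromCols_mul_fromRows, hd, hf]

lemma exists_isEMMPSolution_iff :
    (∃ Q M, IsEMMPSolution Gu Gd Gf Mrf Q M) ↔
      ∃ Y : Matrix qr p (RatFunc ℝ), Y * Gd = 0 ∧ Y * Gf = Mrf :=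
  ⟨fun ⟨_, _, h⟩ => h.exists_mul_eq, fun ⟨_, hd, hf⟩ => exists_isEMMPSolution_of_mul_eq hd hf⟩

end EMMP

theorem emmp_solvable_iff_rank_general
    (p mu md mf qr : ℕ)
    (Gu : Matrix (Fin p) (Fin mu) (RatFunc ℝ))
    (Gd : Matrix (Fin p) (Fin md) (RatFunc ℝ))
    (Gf : Matrix (Fin p) (Fin mf) (RatFunc ℝ))
    (Mrf : Matrix (Fin qr) (Fin mf) (RatFunc ℝ)) :
    (∃ (Q : Matrix (Fin qr) (Fin p ⊕ Fin mu) (RatFunc ℝ))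
        (M : Matrix (Fin qr) (Fin qr) (RatFunc ℝ)),
        Q.IsProperR ∧ Q.IsStableR ∧
        M.IsProperR ∧ M.IsStableR ∧
        (∀ i j : Fin qr, i ≠ j → M i j = 0) ∧ M.det ≠ 0 ∧
        Q * Matrix.fromRows Gu (1 : Matrix (Fin mu) (Fin mu) (RatFunc ℝ)) = 0 ∧
        Q * Matrix.fromRows Gd (0 : Matrix (Fin mu) (Fin md) (RatFunc ℝ)) = 0 ∧
        Q * Matrix.fromRows Gf (0 : Matrix (Fin mu) (Fin mf) (RatFunc ℝ)) = M * Mrf) ↔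
      (Matrix.fromCols Gd Gf).rank =
        (Matrix.fromBlocks Gd Gf (0 : Matrix (Fin qr) (Fin md) (RatFunc ℝ)) Mrf).rank :=
  exists_isEMMPSolution_iff.trans (Matrix.rank_fromCols_eq_rank_fromBlocks_iff Gd Gf Mrf).symm

/-- **Solvability of the exact model-matching problem (EMMP)**. -/
theorem emmp_solvable_iff_rank
    (p mu md mf qr : ℕ)
    (Gu : Matrix (Fin p) (Fin mu) (RatFunc ℝ))
    (Gd : Matrix (Fin p) (Fin md) (RatFunc ℝ))
    (Gf : Matrix (Fin p) (Fin mf) (RatFunc ℝ))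
    (Mrf : Matrix (Fin qr) (Fin mf) (RatFunc ℝ))
    (hMrfP : Mrf.IsProperR) (hMrfS : Mrf.IsStableR) :
    (∃ (Q : Matrix (Fin qr) (Fin p ⊕ Fin mu) (RatFunc ℝ))
        (M : Matrix (Fin qr) (Fin qr) (RatFunc ℝ)),
        Q.IsProperR ∧ Q.IsStableR ∧
        M.IsProperR ∧ M.IsStableR ∧
        (∀ i j : Fin qr, i ≠ j → M i j = 0) ∧ M.det ≠ 0 ∧
        Q * Matrix.fromRows Gu (1 : Matrix (Fin mu) (Fin mu) (RatFunc ℝ)) = 0 ∧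
        Q * Matrix.fromRows Gd (0 : Matrix (Fin mu) (Fin md) (RatFunc ℝ)) = 0 ∧
        Q * Matrix.fromRows Gf (0 : Matrix (Fin mu) (Fin mf) (RatFunc ℝ)) = M * Mrf) ↔
      (Matrix.fromCols Gd Gf).rank =
        (Matrix.fromBlocks Gd Gf (0 : Matrix (Fin qr) (Fin md) (RatFunc ℝ)) Mrf).rank :=
  emmp_solvable_iff_rank_general p mu md mf qr Gu Gd Gf Mrf

end
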